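/- arXiv:1007.2606 — 3 statements merged into one kernel-verified Lean document; each statement's English description precedes it below -/
import Mathlib

section
/- Let u, n ∈ ℝ³ with ‖n‖ = 1, and let N(n) = n¹N₁ + n²N₂ + n³N₃, where N₁, N₂, N₃ are the coefficient matrices of the Weyl-gauge magnetic vector potential equation, so that N(n) = [[n²u²+n³u³, -n¹u², -n¹u³],[-n²u¹, n¹u¹+n³u³, -n²u³],[-n³u¹, -n³u², n¹u¹+n²u²]]. Then the characteristic polynomial of N(n) is λ(λ - u·n)², i.e., the eigenvalues of N(n) are 0 and u·n (with algebraic multiplicity two). -/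
open Polynomial

/-- The characteristic polynomial of the flux Jacobian `N(n)` of the
Weyl-gauge magnetic vector potential equation is `λ (λ - u·n)²`. -/
theorem weyl_flux_jacobian_charpoly
    (u n : EuclideanSpace ℝ (Fin 3)) (hn : ‖n‖ = 1) :
    Matrix.charpoly
      (!![n 1 * u 1 + n 2 * u 2, -(n 0 * u 1), -(n 0 * u 2);
          -(n 1 * u 0), n 0 * u 0 + n 2 * u 2, -(n 1 * u 2);
          -(n 2 * u 0), -(n 2 * u 1), n 0 * u 0 + n 1 * u 1]) =
      X * (X - C (u 0 * n 0 + u 1 * n 1 + u 2 * n 2)) ^ 2 := by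
  rw [Matrix.charpoly, Matrix.det_fin_three]
  simp [Matrix.charmatrix_apply, Matrix.one_apply]
  ring
end

section
/- Let u ∈ ℝ³, ξ > 0, and n ∈ ℝ³ with ‖n‖ = 1. The 4×4 matrix N(n) = [[n²u²+n³u³, -n¹u², -n¹u³, n¹],[-n²u¹, n¹u¹+n³u³, -n²u³, n²],[-n³u¹, -n³u², n¹u¹+n²u², n³],[n¹ξ², n²ξ², n³ξ², 0]] has characteristic polynomial (λ² - ξ²)(λ - u·n)², i.e., its eigenvalues are -ξ, ξ, and u·n (with multiplicity two). -/
/-!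
Identically in `n`, the characteristic polynomial of `N(n)` is `(λ² - ξ² |n|²)(λ - u·n)²`,
a polynomial identity checked by cofactor expansion; `‖n‖ = 1` only enters through `|n|² = 1`.
-/

open Polynomial Matrix

theorem Matrix.det_fin_four {R : Type*} [CommRing R] (A : Matrix (Fin 4) (Fin 4) R) :
    A.det =
      A 0 0 * A 1 1 * A 2 2 * A 3 3 - A 0 0 * A 1 1 * A 2 3 * A 3 2
      - A 0 0 * A 1 2 * A 2 1 * A 3 3 + A 0 0 * A 1 2 * A 2 3 * A 3 1
      + A 0 0 * A 1 3 * A 2 1 * A 3 2 - A 0 0 * A 1 3 * A 2 2 * A 3 1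
      - A 0 1 * A 1 0 * A 2 2 * A 3 3 + A 0 1 * A 1 0 * A 2 3 * A 3 2
      + A 0 1 * A 1 2 * A 2 0 * A 3 3 - A 0 1 * A 1 2 * A 2 3 * A 3 0
      - A 0 1 * A 1 3 * A 2 0 * A 3 2 + A 0 1 * A 1 3 * A 2 2 * A 3 0
      + A 0 2 * A 1 0 * A 2 1 * A 3 3 - A 0 2 * A 1 0 * A 2 3 * A 3 1
      - A 0 2 * A 1 1 * A 2 0 * A 3 3 + A 0 2 * A 1 1 * A 2 3 * A 3 0
      + A 0 2 * A 1 3 * A 2 0 * A 3 1 - A 0 2 * A 1 3 * A 2 1 * A 3 0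
      - A 0 3 * A 1 0 * A 2 1 * A 3 2 + A 0 3 * A 1 0 * A 2 2 * A 3 1
      + A 0 3 * A 1 1 * A 2 0 * A 3 2 - A 0 3 * A 1 1 * A 2 2 * A 3 0
      - A 0 3 * A 1 2 * A 2 0 * A 3 1 + A 0 3 * A 1 2 * A 2 1 * A 3 0 := by
  rw [det_succ_row_zero, Fin.sum_univ_four]
  simp only [Fin.coe_ofNat_eq_mod, det_fin_three, submatrix_apply, Fin.reduceSucc, Fin.succAbove,
    ↓reduceIte, Fin.reduceCastSucc, Fin.reduceLT]
  ring

def lorentzGaugeFluxJacobian {R : Type*} [CommRing R] (u n : Fin 3 → R) (k : R) :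
    Matrix (Fin 4) (Fin 4) R :=
  !![n 1 * u 1 + n 2 * u 2, -(n 0 * u 1), -(n 0 * u 2), n 0;
     -(n 1 * u 0), n 0 * u 0 + n 2 * u 2, -(n 1 * u 2), n 1;
     -(n 2 * u 0), -(n 2 * u 1), n 0 * u 0 + n 1 * u 1, n 2;
     n 0 * k, n 1 * k, n 2 * k, 0]

theorem charpoly_lorentzGaugeFluxJacobian {R : Type*} [CommRing R] (u n : Fin 3 → R) (k : R) :
    (lorentzGaugeFluxJacobian u n k).charpoly =
      (X ^ 2 - C (k * (n ⬝ᵥ n))) * (X - C (u ⬝ᵥ n)) ^ 2 := by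
  rw [charpoly, det_fin_four]
  simp only [lorentzGaugeFluxJacobian, charmatrix_apply_eq, charmatrix_apply_ne, ne_eq, Fin.reduceEq,
    not_false_eq_true, of_apply, cons_val, map_add, map_mul, map_neg, map_zero, dotProduct,
    Fin.sum_univ_three]
  ring

theorem EuclideanSpace.dotProduct_self_eq_norm_sq {ι : Type*} [Fintype ι] (x : EuclideanSpace ℝ ι) :
    x.ofLp ⬝ᵥ x.ofLp = ‖x‖ ^ 2 := by
  rw [← real_inner_self_eq_norm_sq, EuclideanSpace.inner_eq_star_dotProduct]
  simp

theorem lorentz_gauge_charpoly_general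
    (u n : EuclideanSpace ℝ (Fin 3)) (ξ : ℝ) (hn : ‖n‖ = 1) :
    Matrix.charpoly
      (!![n 1 * u 1 + n 2 * u 2, -(n 0 * u 1), -(n 0 * u 2), n 0;
          -(n 1 * u 0), n 0 * u 0 + n 2 * u 2, -(n 1 * u 2), n 1;
          -(n 2 * u 0), -(n 2 * u 1), n 0 * u 0 + n 1 * u 1, n 2;
          n 0 * ξ^2, n 1 * ξ^2, n 2 * ξ^2, 0]) =
      (X ^ 2 - C (ξ^2)) * (X - C (u 0 * n 0 + u 1 * n 1 + u 2 * n 2)) ^ 2 := by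
  have hnn : n.ofLp ⬝ᵥ n.ofLp = 1 := by
    rw [EuclideanSpace.dotProduct_self_eq_norm_sq, hn, one_pow]
  have h := charpoly_lorentzGaugeFluxJacobian u.ofLp n.ofLp (ξ ^ 2)
  rw [hnn, mul_one, dotProduct, Fin.sum_univ_three] at h
  exact h

/-- The 4×4 flux Jacobian of the Lorentz-like gauge system has
characteristic polynomial `(λ² - ξ²)(λ - u·n)²`. -/
theorem lorentz_gauge_charpoly
    (u n : EuclideanSpace ℝ (Fin 3)) (ξ : ℝ) (hξ : 0 < ξ) (hn : ‖n‖ = 1) :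
    Matrix.charpoly
      (!![n 1 * u 1 + n 2 * u 2, -(n 0 * u 1), -(n 0 * u 2), n 0;
          -(n 1 * u 0), n 0 * u 0 + n 2 * u 2, -(n 1 * u 2), n 1;
          -(n 2 * u 0), -(n 2 * u 1), n 0 * u 0 + n 1 * u 1, n 2;
          n 0 * ξ^2, n 1 * ξ^2, n 2 * ξ^2, 0]) =
      (X ^ 2 - C (ξ^2)) * (X - C (u 0 * n 0 + u 1 * n 1 + u 2 * n 2)) ^ 2 :=
  lorentz_gauge_charpoly_general u n ξ hn
end

section
/- Let u ∈ ℝ³, ξ > 0, n a unit vector in ℝ³ with ξ > |u·n|. Then the 4×4 Lorentz-gauge flux Jacobian N(n) = [[n²u²+n³u³, -n¹u², -n¹u³, n¹],[-n²u¹, n¹u¹+n³u³, -n²u³, n²],[-n³u¹, -n³u², n¹u¹+n²u², n³],[n¹ξ², n²ξ², n³ξ², 0]] is diagonalizable over ℝ, i.e., the augmented system is (strongly) hyperbolic. -/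
/-!
The vectors `(n, ±ξ)` are eigenvectors of `N(n)` for `±ξ` because `‖n‖ = 1`, and `(v, u ⬝ᵥ v)` is
an eigenvector for `u ⬝ᵥ n` exactly when `v` is orthogonal to `w = ξ² n - (u ⬝ᵥ n) u`. Since
`n ⬝ᵥ w = ξ² - (u ⬝ᵥ n)² > 0`, the vector `n` does not lie in the plane `w⊥`, so `n` together with
a basis of `w⊥` is a basis of `ℝ³`; the eigenvector matrix then has determinant
`-2ξ · det [n, v₁, v₂] ≠ 0`.
-/

open Matrix

theorem Matrix.isDiag_inv_mul_mul_of_mul_eq_mul_diagonal {ι R : Type*} [Fintype ι] [DecidableEq ι]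
    [CommRing R] {A P : Matrix ι ι R} {d : ι → R} (hP : IsUnit P.det)
    (h : A * P = P * diagonal d) : (P⁻¹ * A * P).IsDiag := by
  rw [Matrix.mul_assoc, h, ← Matrix.mul_assoc, nonsing_inv_mul _ hP, Matrix.one_mul]
  exact isDiag_diagonal d

section CrossProduct

variable {K : Type*} [Field K]

theorem exists_cross_ne_zero {w : Fin 3 → K} (hw : w ≠ 0) : ∃ a, w ⨯₃ a ≠ 0 := by
  obtain ⟨a, ha⟩ := exists_linearIndependent_pair_of_one_lt_finrank
    (by rw [Module.finrank_fin_fun]; norm_num) hw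
  exact ⟨a, crossProduct_ne_zero_iff_linearIndependent.mpr ha⟩

variable [LinearOrder K] [IsStrictOrderedRing K]

theorem exists_orthogonal_pair_dotProduct_cross_ne_zero {n w : Fin 3 → K} (h : n ⬝ᵥ w ≠ 0) :
    ∃ v₁ v₂ : Fin 3 → K, w ⬝ᵥ v₁ = 0 ∧ w ⬝ᵥ v₂ = 0 ∧ n ⬝ᵥ v₁ ⨯₃ v₂ ≠ 0 := by
  -- with `v₁ = w ⨯₃ a` and `v₂ = w ⨯₃ v₁` one gets `v₁ ⨯₃ v₂ = (v₁ ⬝ᵥ v₁) • w`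
  obtain ⟨a, ha⟩ := exists_cross_ne_zero (w := w) (by rintro rfl; simp at h)
  refine ⟨w ⨯₃ a, w ⨯₃ (w ⨯₃ a), dot_self_cross w a, dot_self_cross w _, ?_⟩
  rw [cross_cross_eq_smul_sub_smul', dot_self_cross, zero_smul, sub_zero, dotProduct_smul,
    smul_eq_mul]
  exact mul_ne_zero (mt dotProduct_self_eq_zero.mp ha) h

end CrossProduct

section LorentzGauge

variable (u n : Fin 3 → ℝ) (ξ : ℝ)

def lorentzFluxJacobian : Matrix (Fin 4) (Fin 4) ℝ :=
  !![n 1 * u 1 + n 2 * u 2, -(n 0 * u 1), -(n 0 * u 2), n 0;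
     -(n 1 * u 0), n 0 * u 0 + n 2 * u 2, -(n 1 * u 2), n 1;
     -(n 2 * u 0), -(n 2 * u 1), n 0 * u 0 + n 1 * u 1, n 2;
     n 0 * ξ^2, n 1 * ξ^2, n 2 * ξ^2, 0]

def lorentzEigenvectorMatrix (v₁ v₂ : Fin 3 → ℝ) : Matrix (Fin 4) (Fin 4) ℝ :=
  !![n 0, n 0, v₁ 0, v₂ 0;
     n 1, n 1, v₁ 1, v₂ 1;
     n 2, n 2, v₁ 2, v₂ 2;
     ξ, -ξ, u ⬝ᵥ v₁, u ⬝ᵥ v₂]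

variable {u n ξ}

theorem det_lorentzEigenvectorMatrix (v₁ v₂ : Fin 3 → ℝ) :
    (lorentzEigenvectorMatrix u n ξ v₁ v₂).det = -2 * ξ * (n ⬝ᵥ v₁ ⨯₃ v₂) := by
  rw [lorentzEigenvectorMatrix, cross_apply, vec3_dotProduct n, det_succ_column_zero,
    Fin.sum_univ_four]
  simp only [det_fin_three, submatrix_apply, of_apply, Fin.succAbove, cons_val', cons_val,
    Fin.isValue, Fin.reduceSucc, Fin.reduceCastSucc, Fin.reduceLT, ↓reduceIte, Fin.coe_ofNat_eq_mod]
  ring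

theorem lorentzFluxJacobian_mul_eigenvectorMatrix {v₁ v₂ : Fin 3 → ℝ} (hn : n ⬝ᵥ n = 1)
    (h₁ : (ξ ^ 2 • n - (u ⬝ᵥ n) • u) ⬝ᵥ v₁ = 0) (h₂ : (ξ ^ 2 • n - (u ⬝ᵥ n) • u) ⬝ᵥ v₂ = 0) :
    lorentzFluxJacobian u n ξ * lorentzEigenvectorMatrix u n ξ v₁ v₂ =
      lorentzEigenvectorMatrix u n ξ v₁ v₂ * diagonal ![ξ, -ξ, u ⬝ᵥ n, u ⬝ᵥ n] := by
  simp only [sub_dotProduct, smul_dotProduct, smul_eq_mul, sub_eq_zero, vec3_dotProduct]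
    at hn h₁ h₂
  ext i j
  rw [mul_diagonal]
  fin_cases i <;> fin_cases j <;>
    simp only [lorentzFluxJacobian, lorentzEigenvectorMatrix, mul_apply, Fin.sum_univ_four,
      vec3_dotProduct, of_apply, cons_val', cons_val, cons_val_zero, cons_val_one, cons_val_fin_one,
      Fin.isValue, Fin.reduceFinMk, Fin.zero_eta, Fin.mk_one] <;>
    first
    | ring1
    | linear_combination ξ ^ 2 * hn
    | linear_combination h₁
    | linear_combination h₂

theorem exists_lorentzFluxJacobian_diagonalization (hn : n ⬝ᵥ n = 1) (hspeed : |u ⬝ᵥ n| < ξ) :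
    ∃ P : Matrix (Fin 4) (Fin 4) ℝ, IsUnit P.det ∧
      (P⁻¹ * lorentzFluxJacobian u n ξ * P).IsDiag := by
  have hξ : 0 < ξ := (abs_nonneg _).trans_lt hspeed
  have hw : n ⬝ᵥ (ξ ^ 2 • n - (u ⬝ᵥ n) • u) ≠ 0 := by
    rw [dotProduct_sub, dotProduct_smul, dotProduct_smul, hn, dotProduct_comm n u, smul_eq_mul,
      smul_eq_mul, mul_one, ← sq, sub_ne_zero]
    exact (sq_lt_sq.mpr (hspeed.trans_eq (abs_of_pos hξ).symm)).ne'
  obtain ⟨v₁, v₂, h₁, h₂, hcross⟩ := exists_orthogonal_pair_dotProduct_cross_ne_zero hw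
  have hdet : IsUnit (lorentzEigenvectorMatrix u n ξ v₁ v₂).det := by
    rw [det_lorentzEigenvectorMatrix, isUnit_iff_ne_zero]
    exact mul_ne_zero (mul_ne_zero (by norm_num) hξ.ne') hcross
  exact ⟨_, hdet, isDiag_inv_mul_mul_of_mul_eq_mul_diagonal hdet
    (lorentzFluxJacobian_mul_eigenvectorMatrix hn h₁ h₂)⟩

end LorentzGauge

theorem lorentz_gauge_diagonalizable_general
    (u n : EuclideanSpace ℝ (Fin 3)) (ξ : ℝ) (hn : ‖n‖ = 1)
    (hspeed : |u 0 * n 0 + u 1 * n 1 + u 2 * n 2| < ξ) :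
    ∃ P : Matrix (Fin 4) (Fin 4) ℝ, IsUnit P.det ∧
      (P⁻¹ *
        (!![n 1 * u 1 + n 2 * u 2, -(n 0 * u 1), -(n 0 * u 2), n 0;
            -(n 1 * u 0), n 0 * u 0 + n 2 * u 2, -(n 1 * u 2), n 1;
            -(n 2 * u 0), -(n 2 * u 1), n 0 * u 0 + n 1 * u 1, n 2;
            n 0 * ξ^2, n 1 * ξ^2, n 2 * ξ^2, 0]) * P).IsDiag := by
  have hn' : n.ofLp ⬝ᵥ n.ofLp = 1 := by
    have h := real_inner_self_eq_norm_sq n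
    rwa [EuclideanSpace.inner_eq_star_dotProduct, star_trivial, hn, one_pow] at h
  exact exists_lorentzFluxJacobian_diagonalization hn' (by rwa [vec3_dotProduct])

/-- If `ξ > |u·n|`, the 4×4 Lorentz-gauge flux Jacobian is diagonalizable
over `ℝ`: the augmented system is strongly hyperbolic. -/
theorem lorentz_gauge_diagonalizable
    (u n : EuclideanSpace ℝ (Fin 3)) (ξ : ℝ) (hξ : 0 < ξ) (hn : ‖n‖ = 1)
    (hspeed : |u 0 * n 0 + u 1 * n 1 + u 2 * n 2| < ξ) :
    ∃ P : Matrix (Fin 4) (Fin 4) ℝ, IsUnit P.det ∧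
      (P⁻¹ *
        (!![n 1 * u 1 + n 2 * u 2, -(n 0 * u 1), -(n 0 * u 2), n 0;
            -(n 1 * u 0), n 0 * u 0 + n 2 * u 2, -(n 1 * u 2), n 1;
            -(n 2 * u 0), -(n 2 * u 1), n 0 * u 0 + n 1 * u 1, n 2;
            n 0 * ξ^2, n 1 * ξ^2, n 2 * ξ^2, 0]) * P).IsDiag :=
  lorentz_gauge_diagonalizable_general u n ξ hn hspeed
end
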